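/- arXiv:2207.00450 — 5 statements merged into one kernel-verified Lean document; each statement's English description precedes it below -/
import Mathlib

section
/- In any undirected graph, the family of odd cycles (cycles with an odd number of edges) is uncrossable: if C₁ and C₂ are odd cycles and P₂ is a path in C₂ sharing only its endpoints v, w with C₁, then one of the two v-w-paths forming C₁ can be chosen as P₁ so that P₁ + P₂ is an odd cycle and (C₁ − P₁) + (C₂ − P₂) contains an odd cycle. -/
open Finset

variable {V : Type*} [DecidableEq V]

/-- The edge set of a (simple) cycle in `G`. -/
def IsCycleEdges (G : SimpleGraph V) (s : Finset (Sym2 V)) : Prop :=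
  ∃ (u : V) (c : G.Walk u u), c.IsCycle ∧ c.edges.toFinset = s

/-- The edge set of a (simple) path from `v` to `w` in `G`. -/
def IsPathEdges (G : SimpleGraph V) (v w : V) (s : Finset (Sym2 V)) : Prop :=
  ∃ p : G.Walk v w, p.IsPath ∧ p.edges.toFinset = s

/-- The set of vertices covered by an edge set. -/
def edgeVerts (s : Finset (Sym2 V)) : Set V := {x | ∃ e ∈ s, x ∈ e}

/-- A family of cycles (given by their edge sets) is uncrossable:
for `C₁, C₂` in the family and a `v`-`w`-path `P₂` contained in `C₂` sharing only its
endpoints `v, w` with `C₁`, there is a `v`-`w`-path `P₁` contained in `C₁` such that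
`P₁ + P₂` belongs to the family and `(C₁ - P₁) + (C₂ - P₂)` contains a member of the family. -/
def Uncrossable (G : SimpleGraph V) (𝒞 : Set (Finset (Sym2 V))) : Prop :=
  ∀ C₁ ∈ 𝒞, ∀ C₂ ∈ 𝒞, ∀ v w : V, v ≠ w → ∀ P₂ : Finset (Sym2 V),
    IsPathEdges G v w P₂ → P₂ ⊆ C₂ →
    edgeVerts P₂ ∩ edgeVerts C₁ ⊆ {v, w} →
    v ∈ edgeVerts C₁ → w ∈ edgeVerts C₁ →
    ∃ P₁ : Finset (Sym2 V), IsPathEdges G v w P₁ ∧ P₁ ⊆ C₁ ∧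
      (P₁ ∪ P₂) ∈ 𝒞 ∧ ∃ C ∈ 𝒞, C ⊆ (C₁ \ P₁) ∪ (C₂ \ P₂)

/-! Split `C₁` at `v` and `w` into two arcs. As `C₁` is odd, the arcs have different parities, so
one of them, `P₁`, makes `P₁ + P₂` odd; since `P₁` and `P₂` share only their endpoints, this is an
odd cycle. A path inside a cycle is one of its two arcs, so `C₂ - P₂` is a `w`-`v` walk `R`. The
other arc of `C₁` followed by `R` is a closed walk of length `|C₁| + |C₂| - |P₁ + P₂|`, which is
odd, and every odd closed walk contains the edges of an odd cycle. -/

lemma List.toFinset_subset_toFinset_iff {α : Type*} [DecidableEq α] {l m : List α} :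
    l.toFinset ⊆ m.toFinset ↔ l ⊆ m :=
  Multiset.toFinset_subset

lemma List.toFinset_sdiff_eq_of_perm {α : Type*} [DecidableEq α] {l₁ l₂ l : List α}
    (h : (l₁ ++ l₂).Perm l) (hl : l.Nodup) : l.toFinset \ l₁.toFinset = l₂.toFinset := by
  rw [← List.toFinset_eq_of_perm _ _ h, List.toFinset_append, Finset.union_sdiff_cancel_left]
  exact List.disjoint_toFinset_iff_disjoint.mpr (List.disjoint_of_nodup_append (h.nodup_iff.mpr hl))

def oddCycles (G : SimpleGraph V) : Set (Finset (Sym2 V)) := {s | IsCycleEdges G s ∧ Odd s.card}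

section

omit [DecidableEq V]

lemma edgeVerts_mono {s t : Finset (Sym2 V)} (h : s ⊆ t) : edgeVerts s ⊆ edgeVerts t :=
  fun _ ⟨e, he, hx⟩ => ⟨e, h he, hx⟩

namespace SimpleGraph.Walk

variable {G : SimpleGraph V}

lemma IsPath.start_notMem_support_tail {u v : V} {p : G.Walk u v} (hp : p.IsPath) :
    u ∉ p.support.tail := by
  have := hp.support_nodup
  rw [← cons_tail_support, List.nodup_cons] at this
  exact this.1

lemma IsPath.exists_eq_cons_of_mem_edges {u x z : V} {p : G.Walk u z} (hp : p.IsPath)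
    (he : s(u, x) ∈ p.edges) : ∃ (h : G.Adj u x) (q : G.Walk x z), p = cons h q := by
  cases p with
  | nil => simp at he
  | cons h q =>
    have hx := hp.eq_snd_of_mem_edges he
    rw [snd_cons] at hx
    subst hx
    exact ⟨h, q, rfl⟩

lemma IsTrail.edges_subset_of_cons_edges_subset {u x y z : V} {h h' : G.Adj u x}
    {q : G.Walk x y} {d : G.Walk x z} (hq : (cons h q).IsTrail)
    (hsub : (cons h q).edges ⊆ (cons h' d).edges) : q.edges ⊆ d.edges := by
  intro e he
  rcases List.mem_cons.mp (hsub (List.mem_cons_of_mem _ he)) with rfl | he'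
  · exact absurd he (List.nodup_cons.mp hq.edges_nodup).1
  · exact he'

lemma IsCycle.eq_snd_or_eq_penultimate_of_mem_edges {v z : V} {c : G.Walk v v} (hc : c.IsCycle)
    (he : s(v, z) ∈ c.edges) : z = c.snd ∨ z = c.penultimate := by
  cases c with
  | nil => exact absurd hc not_isCycle_nil
  | cons h d =>
    rw [penultimate_cons_of_not_nil _ _ (not_nil_of_isCycle_cons hc), snd_cons]
    rw [edges_cons, List.mem_cons] at he
    rcases he with he | he
    · exact .inl (Sym2.congr_right.mp he)
    · exact .inr (((cons_isCycle_iff d h).mp hc).1.eq_penultimate_of_mem_edges he)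

lemma IsPath.isCycle_append_reverse {v w : V} {A P : G.Walk v w} (hA : A.IsPath) (hP : P.IsPath)
    (hvw : v ≠ w) (hshare : ∀ x ∈ A.support, x ∈ P.support → x = v ∨ x = w)
    (hodd : Odd (A.length + P.length)) : (A.append P.reverse).IsCycle := by
  refine hA.isCycle_append hP.reverse (fun x hxA hxP => ?_) ?_
  · have hxP' : x ∈ P.support := by simpa using List.mem_of_mem_tail hxP
    rcases hshare x (List.mem_of_mem_tail hxA) hxP' with rfl | rfl
    · exact hA.start_notMem_support_tail hxA
    · exact hP.reverse.start_notMem_support_tail hxP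
  · have hA0 : A.length ≠ 0 := fun h => not_nil_of_ne hvw (length_eq_zero_iff.mp h)
    have hP0 : P.length ≠ 0 := fun h => not_nil_of_ne hvw (length_eq_zero_iff.mp h)
    rw [Nat.odd_iff] at hodd
    rw [length_reverse]
    omega

lemma exists_isCycle_odd_length_edges_subset {u : V} (W : G.Walk u u) (hW : Odd W.length) :
    ∃ (x : V) (c : G.Walk x x), c.IsCycle ∧ Odd c.length ∧ c.edges ⊆ W.edges := by
  obtain ⟨n, hn⟩ : ∃ n, W.length = n := ⟨_, rfl⟩
  induction n using Nat.strong_induction_on generalizing u with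
  | _ n ih =>
  cases W with
  | nil => simp at hW
  | cons h t =>
    by_cases ht : t.IsPath
    · refine ⟨u, cons h t, (cons_isCycle_iff t h).mpr ⟨ht, fun he => ?_⟩, hW, List.Subset.refl _⟩
      have := ht.length_eq_one_of_mem_edges (Sym2.eq_swap ▸ he)
      norm_num [this] at hW
    -- `t` runs around a nontrivial closed subwalk `q`; cutting it out leaves a shorter closed walk,
    -- and one of the two is odd.
    · obtain ⟨y, q, ⟨r, s, rfl⟩, hq⟩ : ∃ (y : V) (q : G.Walk y y), q.IsSubwalk t ∧ ¬q.Nil := by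
        simpa using isPath_iff_isSubwalk_imp_nil.not.mp ht
      have hq0 : q.length ≠ 0 := fun h => hq (length_eq_zero_iff.mp h)
      simp only [length_cons, length_append] at hW hn
      rcases Nat.even_or_odd q.length with hqe | hqo
      · obtain ⟨x, c, hc, hodd, hsub⟩ := ih _ (by simp only [length_cons, length_append]; omega)
          (cons h (r.append s)) (by
            rw [Nat.odd_iff] at hW ⊢
            rw [Nat.even_iff] at hqe
            simp only [length_cons, length_append]
            omega) rfl
        refine ⟨x, c, hc, hodd, List.Subset.trans hsub fun e he => ?_⟩
        simp only [edges_cons, edges_append, List.mem_cons, List.mem_append] at he ⊢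
        tauto
      · obtain ⟨x, c, hc, hodd, hsub⟩ := ih _ (by omega) q hqo rfl
        refine ⟨x, c, hc, hodd, List.Subset.trans hsub fun e he => ?_⟩
        simp only [edges_cons, edges_append, List.mem_cons, List.mem_append]
        tauto

end SimpleGraph.Walk

end

namespace SimpleGraph.Walk

variable {G : SimpleGraph V}

lemma mem_edgeVerts_toFinset_edges_iff {u v x : V} {p : G.Walk u v} (hp : ¬p.Nil) :
    x ∈ edgeVerts p.edges.toFinset ↔ x ∈ p.support := by
  simp [edgeVerts, mem_support_iff_exists_mem_edges_of_not_nil hp]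

lemma IsTrail.card_toFinset_edges {u v : V} {p : G.Walk u v} (hp : p.IsTrail) :
    p.edges.toFinset.card = p.length := by
  rw [List.toFinset_card_of_nodup hp.edges_nodup, length_edges]

lemma IsPath.exists_eq_takeUntil_of_edges_subset {u w y : V} {p : G.Walk u w} {c : G.Walk u y}
    (hp : p.IsPath) (hc : c.IsPath) (h : p.edges ⊆ c.edges) :
    ∃ hw : w ∈ c.support, p = c.takeUntil w hw := by
  induction p with
  | nil => exact ⟨c.start_mem_support, (takeUntil_first c).symm⟩
  | @cons a b d hab q ih =>
    obtain ⟨h', c', rfl⟩ := hc.exists_eq_cons_of_mem_edges (x := b) (h (by simp))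
    obtain ⟨hw, rfl⟩ := ih hp.of_cons hc.of_cons (hp.isTrail.edges_subset_of_cons_edges_subset h)
    have had : a ≠ d := fun had => hp.start_notMem_support_tail (by simp [had])
    exact ⟨List.mem_of_mem_tail hw, (takeUntil_cons hw had h').symm⟩

lemma IsCycle.exists_append_eq_of_snd_eq {v w : V} {c : G.Walk v v} {p : G.Walk v w}
    (hc : c.IsCycle) (hp : p.IsPath) (hpc : p.edges ⊆ c.edges) (hnil : ¬p.Nil)
    (hsnd : p.snd = c.snd) : ∃ r : G.Walk w v, p.append r = c := by
  cases c with
  | nil => exact absurd hc not_isCycle_nil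
  | cons h d =>
    cases p with
    | nil => exact absurd nil_nil hnil
    | cons h' q =>
      simp only [snd_cons] at hsnd
      subst hsnd
      obtain ⟨hw, rfl⟩ := hp.of_cons.exists_eq_takeUntil_of_edges_subset
        ((cons_isCycle_iff d h).mp hc).1 (hp.isTrail.edges_subset_of_cons_edges_subset hpc)
      exact ⟨d.dropUntil w hw, by rw [cons_append, take_spec]⟩

lemma IsCycle.exists_edges_perm_of_isPath {u v w : V} {c : G.Walk u u} {p : G.Walk v w}
    (hc : c.IsCycle) (hp : p.IsPath) (hvw : v ≠ w) (hpc : p.edges ⊆ c.edges) :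
    ∃ r : G.Walk w v, (p.edges ++ r.edges).Perm c.edges := by
  have hnil : ¬p.Nil := not_nil_of_ne hvw
  have hv : v ∈ c.support := c.fst_mem_support_of_mem_edges (hpc (mk_start_snd_mem_edges hnil))
  have hperm := (c.rotate_edges v hv).perm
  have hk := hc.rotate hv
  have hpk : p.edges ⊆ (c.rotate v hv).edges := fun e he => hperm.mem_iff.mpr (hpc he)
  rcases hk.eq_snd_or_eq_penultimate_of_mem_edges (hpk (mk_start_snd_mem_edges hnil)) with h | h
  · obtain ⟨r, hr⟩ := hk.exists_append_eq_of_snd_eq hp hpk hnil h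
    exact ⟨r, by rw [← edges_append, hr]; exact hperm⟩
  · obtain ⟨r, hr⟩ := hk.reverse.exists_append_eq_of_snd_eq hp
      (fun e he => by simpa using hpk he) hnil (by rw [h, snd_reverse])
    exact ⟨r, by rw [← edges_append, hr, edges_reverse]; exact (List.reverse_perm _).trans hperm⟩

lemma IsCycle.exists_isPath_append_eq {v w : V} {c : G.Walk v v} (hc : c.IsCycle)
    (hw : w ∈ c.support) (hvw : v ≠ w) :
    ∃ (A : G.Walk v w) (B : G.Walk w v), A.IsPath ∧ B.IsPath ∧ A.append B = c :=
  ⟨_, _, hc.isPath_takeUntil hw,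
    IsCycle.isPath_of_append_right ((nil_takeUntil c hw).not.mpr hvw) ((take_spec c hw).symm ▸ hc),
    take_spec c hw⟩

/-- The two arcs of an odd cycle between `v` and `w` have different parities. -/
lemma IsCycle.exists_isPath_odd_add {u v w : V} {c : G.Walk u u} (hc : c.IsCycle)
    (hodd : Odd c.length) (hv : v ∈ c.support) (hw : w ∈ c.support) (hvw : v ≠ w) (n : ℕ) :
    ∃ (A : G.Walk v w) (B : G.Walk w v),
      A.IsPath ∧ (A.edges ++ B.edges).Perm c.edges ∧ Odd (A.length + n) := by
  obtain ⟨A, B, hA, hB, hAB⟩ :=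
    (hc.rotate hv).exists_isPath_append_eq ((mem_support_rotate_iff ..).mpr hw) hvw
  have hperm : (A.edges ++ B.edges).Perm c.edges := by
    rw [← edges_append, hAB]
    exact (rotate_edges ..).perm
  have hlen : A.length + B.length = c.length := by rw [← length_append, hAB, length_rotate]
  by_cases hAn : Odd (A.length + n)
  · exact ⟨A, B, hA, hperm, hAn⟩
  · refine ⟨B.reverse, A.reverse, hB.reverse, ?_, ?_⟩
    · rw [edges_reverse, edges_reverse]
      exact ((List.reverse_perm _).append (List.reverse_perm _)).trans
        (List.perm_append_comm.trans hperm)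
    · rw [← hlen, Nat.odd_iff] at hodd
      rw [Nat.odd_iff] at hAn ⊢
      rw [length_reverse]
      omega

lemma IsCycle.toFinset_edges_mem_oddCycles {u : V} {c : G.Walk u u} (hc : c.IsCycle)
    (hodd : Odd c.length) : c.edges.toFinset ∈ oddCycles G :=
  ⟨⟨u, c, hc, rfl⟩, hc.isTrail.card_toFinset_edges ▸ hodd⟩

lemma exists_mem_oddCycles_subset_of_odd_length {u : V} (W : G.Walk u u) (hW : Odd W.length) :
    ∃ C ∈ oddCycles G, C ⊆ W.edges.toFinset := by
  obtain ⟨x, c, hc, hodd, hsub⟩ := W.exists_isCycle_odd_length_edges_subset hW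
  exact ⟨_, hc.toFinset_edges_mem_oddCycles hodd, List.toFinset_subset_toFinset_iff.mpr hsub⟩

lemma exists_mem_oddCycles_subset_sdiff {u₁ u₂ v w : V} {c₁ : G.Walk u₁ u₁} {c₂ : G.Walk u₂ u₂}
    {A P : G.Walk v w} {B R : G.Walk w v} (hc₁ : c₁.IsCycle) (hc₂ : c₂.IsCycle)
    (hodd₁ : Odd c₁.length) (hodd₂ : Odd c₂.length) (hAB : (A.edges ++ B.edges).Perm c₁.edges)
    (hPR : (P.edges ++ R.edges).Perm c₂.edges) (hAP : Odd (A.length + P.length)) :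
    ∃ C ∈ oddCycles G, C ⊆ (c₁.edges.toFinset \ A.edges.toFinset) ∪
      (c₂.edges.toFinset \ P.edges.toFinset) := by
  have hBR : Odd (B.append R.reverse).length := by
    have h₁ := hAB.length_eq
    have h₂ := hPR.length_eq
    simp only [List.length_append, length_edges] at h₁ h₂
    simp only [length_append, length_reverse]
    rw [Nat.odd_iff] at hodd₁ hodd₂ hAP ⊢
    omega
  obtain ⟨C, hC, hCBR⟩ := exists_mem_oddCycles_subset_of_odd_length _ hBR
  refine ⟨C, hC, hCBR.trans ?_⟩
  rw [List.toFinset_sdiff_eq_of_perm hAB hc₁.edges_nodup,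
    List.toFinset_sdiff_eq_of_perm hPR hc₂.edges_nodup]
  simp [edges_append]

end SimpleGraph.Walk

open SimpleGraph Walk

/-- In any undirected graph, the family of odd cycles is uncrossable. -/
theorem oddCycles_uncrossable (G : SimpleGraph V) :
    Uncrossable G {s | IsCycleEdges G s ∧ Odd s.card} := by
  rintro _ ⟨⟨u₁, c₁, hc₁, rfl⟩, hodd₁⟩ _ ⟨⟨u₂, c₂, hc₂, rfl⟩, hodd₂⟩ v w hvw _ ⟨p, hp, rfl⟩
    hpc₂ hshare hv hw
  rw [hc₁.isTrail.card_toFinset_edges] at hodd₁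
  rw [hc₂.isTrail.card_toFinset_edges] at hodd₂
  rw [mem_edgeVerts_toFinset_edges_iff hc₁.not_nil] at hv hw
  obtain ⟨A, B, hA, hAB, hAp⟩ := hc₁.exists_isPath_odd_add hodd₁ hv hw hvw p.length
  obtain ⟨R, hpR⟩ :=
    hc₂.exists_edges_perm_of_isPath hp hvw (List.toFinset_subset_toFinset_iff.mp hpc₂)
  have hAc₁ : A.edges.toFinset ⊆ c₁.edges.toFinset :=
    List.toFinset_subset_toFinset_iff.mpr fun _ he => hAB.subset (List.mem_append_left _ he)
  refine ⟨A.edges.toFinset, ⟨A, hA, rfl⟩, hAc₁, ?_, ?_⟩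
  · have hAp_share : ∀ x ∈ A.support, x ∈ p.support → x = v ∨ x = w := fun x hxA hxp => by
      simpa using hshare ⟨(mem_edgeVerts_toFinset_edges_iff (not_nil_of_ne hvw)).mpr hxp,
        edgeVerts_mono hAc₁ ((mem_edgeVerts_toFinset_edges_iff (not_nil_of_ne hvw)).mpr hxA)⟩
    have hcyc := (hA.isCycle_append_reverse hp hvw hAp_share hAp).toFinset_edges_mem_oddCycles
      (by simpa using hAp)
    rwa [edges_append, edges_reverse, List.toFinset_append, List.toFinset_reverse] at hcyc
  · exact exists_mem_oddCycles_subset_sdiff hc₁ hc₂ hodd₁ hodd₂ hAB hpR hAp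
end

section
/- Let G be a 2-vertex-connected undirected graph, D a nonempty subset of its edges such that G − D (the graph after deleting the edges of D) is connected. Then every edge of G belongs to a cycle containing exactly one edge of D (a D-cycle). -/
open Finset

variable {V : Type*} [DecidableEq V] [Fintype V]

/-- A graph is 2-vertex-connected: it has at least 3 vertices and deleting any single
vertex leaves a connected graph. -/
def TwoConnected (G : SimpleGraph V) : Prop :=
  3 ≤ Fintype.card V ∧ ∀ v : V, (G.induce {x | x ≠ v}).Connected

/-!
Among the cycles through `e` containing at least one edge of `D`, take one, `c`, with the fewest
`D`-edges; such cycles exist because in a 2-connected graph any two edges lie on a common cycle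
(grow a cycle through one edge by ears until it reaches the other). Suppose `c` had two `D`-edges
`d₁ ≠ d₂`. They cut `c` into two arcs, and a path of `G - D` joining the ends of `d₁` contains an
ear `ζ` from one arc to the other. The theta graph `c ∪ ζ` has two more cycles, one through `d₁`
but not `d₂`, the other through `d₂` but not `d₁`. Together they cover `c`, so one of them passes
through `e`, and it has fewer, but still at least one, `D`-edges.
-/

open SimpleGraph

theorem exists_ne_ne_of_three_le_card {α : Type*} [Fintype α] (h : 3 ≤ Fintype.card α) (a b : α) :
    ∃ c, c ≠ a ∧ c ≠ b := by
  classical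
  by_contra! hc
  have hsub : (Finset.univ : Finset α) ⊆ {a, b} := fun c _ => by
    rcases eq_or_ne c a with rfl | hca
    · simp
    · simp [hc c hca]
  have := (Finset.card_le_card hsub).trans Finset.card_le_two
  rw [Finset.card_univ] at this
  omega

theorem List.toFinset_inter_ssubset {α : Type*} [DecidableEq α] {l l' : List α} {D : Finset α}
    {d : α} (h : ∀ f ∈ l', f ∈ D → f ∈ l ∧ f ≠ d) (hd : d ∈ l) (hdD : d ∈ D) :
    l'.toFinset ∩ D ⊂ l.toFinset ∩ D := by
  refine (Finset.ssubset_iff_of_subset fun f hf => ?_).2 ⟨d, by simp [hd, hdD], fun hd' => ?_⟩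
  · obtain ⟨hf, hfD⟩ := Finset.mem_inter.1 hf
    exact Finset.mem_inter.2 ⟨List.mem_toFinset.2 (h f (List.mem_toFinset.1 hf) hfD).1, hfD⟩
  · obtain ⟨hd', -⟩ := Finset.mem_inter.1 hd'
    exact (h d (List.mem_toFinset.1 hd') hdD).2 rfl

namespace SimpleGraph.Walk

variable {V : Type*} {G : SimpleGraph V} {t u v w x y z x₁ y₁ x₂ y₂ : V}

theorem one_lt_length_of_notMem_edges {p : G.Walk u v} (huv : u ≠ v) (h : s(u, v) ∉ p.edges) :
    1 < p.length := by
  match p with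
  | nil => exact absurd rfl huv
  | cons _ nil => simp at h
  | cons _ (cons _ _) => simp

theorem isPath_append_cons_iff {p : G.Walk u v} {q : G.Walk w x} (h : G.Adj v w) :
    (p.append (cons h q)).IsPath ↔ p.IsPath ∧ q.IsPath ∧ p.support.Disjoint q.support := by
  simp only [isPath_def, support_append, support_cons, List.tail_cons, List.nodup_append']

theorem IsPath.isCycle_append_of_inter_support {p : G.Walk u v} {q : G.Walk v u} (hp : p.IsPath)
    (hq : q.IsPath) (hpq : ∀ x ∈ p.support, x ∈ q.support → x = u ∨ x = v)
    (hn : 1 < p.length ∨ 1 < q.length) : (p.append q).IsCycle := by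
  refine hp.isCycle_append hq (List.disjoint_left.2 fun x hxp hxq => ?_) hn
  rcases hpq x (List.mem_of_mem_tail hxp) (List.mem_of_mem_tail hxq) with rfl | rfl
  · exact (List.nodup_cons.1 (p.cons_tail_support ▸ hp.support_nodup)).1 hxp
  · exact (List.nodup_cons.1 (q.cons_tail_support ▸ hq.support_nodup)).1 hxq

theorem IsCycle.append_comm {p : G.Walk u v} {q : G.Walk v u} (h : (p.append q).IsCycle) :
    (q.append p).IsCycle := by
  rw [isCycle_def, isTrail_def, edges_append, tail_support_append] at h ⊢
  refine ⟨List.nodup_append_comm.1 h.1, fun h0 => h.2.1 ?_, List.nodup_append_comm.1 h.2.2⟩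
  rw [eq_nil_iff_nil, nil_append_iff] at h0 ⊢
  exact h0.symm

theorem exists_eq_append_cons_of_mem_edges {p : G.Walk u v} {d : Sym2 V} (hd : d ∈ p.edges) :
    ∃ (x y : V) (q : G.Walk u x) (h : G.Adj x y) (r : G.Walk y v),
      s(x, y) = d ∧ p = q.append (cons h r) := by
  induction p with
  | nil => simp at hd
  | cons h p ih =>
    rcases List.mem_cons.1 hd with rfl | hd
    · exact ⟨_, _, nil, h, p, rfl, rfl⟩
    · obtain ⟨x, y, q, h', r, hxy, rfl⟩ := ih hd
      exact ⟨x, y, cons h q, h', r, hxy, rfl⟩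

variable [DecidableEq V]

theorem exists_isPath_first_mem (p : G.Walk u v) {S : Set V} (hv : v ∈ S) :
    ∃ w ∈ S, ∃ q : G.Walk u w, q.IsPath ∧ q.support ⊆ p.support ∧ q.edges ⊆ p.edges ∧
      ∀ x ∈ q.support, x ∈ S → x = w := by
  suffices ∃ w ∈ S, ∃ q : G.Walk u w, q.support ⊆ p.support ∧ q.edges ⊆ p.edges ∧
      ∀ x ∈ q.support, x ∈ S → x = w by
    obtain ⟨w, hw, q, hqs, hqe, hqS⟩ := this
    exact ⟨w, hw, q.bypass, q.bypass_isPath, fun x hx => hqs (q.support_bypass_subset_support hx),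
      fun f hf => hqe (q.edges_bypass_subset_edges hf),
      fun x hx => hqS x (q.support_bypass_subset_support hx)⟩
  induction p with
  | nil => exact ⟨_, hv, nil, by simp, by simp, by simp⟩
  | @cons u _ _ h p ih =>
    by_cases hu : u ∈ S
    · exact ⟨u, hu, nil, by simp, by simp, by simp⟩
    obtain ⟨w, hw, q, hqs, hqe, hqS⟩ := ih hv
    refine ⟨w, hw, cons h q, ?_, ?_, ?_⟩
    · simpa using List.cons_subset_cons u hqs
    · simpa using List.cons_subset_cons _ hqe
    · rintro x hx hxS
      rcases List.mem_cons.1 (by simpa using hx) with rfl | hx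
      · exact absurd hxS hu
      · exact hqS x hx hxS

theorem exists_isPath_last_mem_first_mem (p : G.Walk u v) {S T : Set V} (hu : u ∈ S) (hv : v ∈ T) :
    ∃ z ∈ S, ∃ w ∈ T, ∃ q : G.Walk z w, q.IsPath ∧ q.edges ⊆ p.edges ∧
      (∀ x ∈ q.support, x ∈ S → x = z) ∧ (∀ x ∈ q.support, x ∈ T → x = w) := by
  obtain ⟨w, hw, q, -, hqs, hqe, hqT⟩ := p.exists_isPath_first_mem hv
  obtain ⟨z, hz, r, hr, hrs, hre, hrS⟩ := q.reverse.exists_isPath_first_mem hu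
  refine ⟨z, hz, w, hw, r.reverse, hr.reverse, fun f hf => hqe ?_,
    fun x hx => hrS x (by simpa using hx),
    fun x hx => hqT x (by simpa using hrs (by simpa using hx))⟩
  simpa using hre (by simpa using hf)

theorem IsCycle.exists_isCycle_cover_of_ear {C : G.Walk t t} (hC : C.IsCycle) {a b : V}
    (ha : a ∈ C.support) (hb : b ∈ C.support) (hab : a ≠ b) {r : G.Walk a b} (hr : r.IsPath)
    (hrC : ∀ x ∈ r.support, x ∈ C.support → x = a ∨ x = b)
    (hlen : 1 < r.length ∨ s(a, b) ∉ C.edges) :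
    ∃ c₁ c₂ : G.Walk a a, c₁.IsCycle ∧ c₂.IsCycle ∧ r.edges ⊆ c₁.edges ∧ r.edges ⊆ c₂.edges ∧
      C.support ⊆ c₁.support ++ c₂.support ∧ C.edges ⊆ c₁.edges ++ c₂.edges := by
  set C' := C.rotate a ha
  have hb' : b ∈ C'.support := (C.mem_support_rotate_iff a ha).2 hb
  set p := C'.takeUntil b hb'
  set q := C'.dropUntil b hb'
  have hpq : p.append q = C' := C'.take_spec hb'
  have hC' : (p.append q).IsCycle := hpq ▸ hC.rotate ha
  have hsupp : ∀ x, x ∈ C.support ↔ x ∈ p.support ∨ x ∈ q.support := fun x => by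
    rw [← mem_support_append_iff, hpq, C.mem_support_rotate_iff]
  have hedges : ∀ f, f ∈ C.edges ↔ f ∈ p.edges ∨ f ∈ q.edges := fun f => by
    rw [← List.mem_append, ← edges_append, hpq, (C.rotate_edges a ha).perm.mem_iff]
  have hcyc : ∀ s : G.Walk b a, s.IsPath → (∀ x ∈ s.support, x ∈ C.support) →
      (∀ f ∈ s.edges, f ∈ C.edges) → (r.append s).IsCycle := fun s hs hsC hfC =>
    hr.isCycle_append_of_inter_support hs (fun x hx hxs => hrC x hx (hsC x hxs))
      (hlen.imp_right fun h => one_lt_length_of_notMem_edges hab.symm fun hf =>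
        h (hfC _ (by rwa [Sym2.eq_swap] at hf)))
  refine ⟨r.append q, r.append p.reverse,
    hcyc q (hC'.isPath_of_append_right (not_nil_of_ne hab)) (fun x hx => (hsupp x).2 (.inr hx))
      (fun f hf => (hedges f).2 (.inr hf)),
    hcyc p.reverse (hC'.isPath_of_append_left (not_nil_of_ne hab.symm)).reverse
      (fun x hx => (hsupp x).2 (.inl (by simpa using hx)))
      (fun f hf => (hedges f).2 (.inl (by simpa using hf))),
    by simp, by simp, fun x hx => ?_, fun f hf => ?_⟩
  · rcases (hsupp x).1 hx with h | h <;> simp [mem_support_append_iff, h]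
  · rcases (hedges f).1 hf with h | h <;> simp [h]

theorem isCycle_dropUntil_append_cons_takeUntil_append {A₁ : G.Walk t x₁} {A₂ : G.Walk y₁ x₂}
    (h : G.Adj x₁ y₁) (hA₁ : A₁.IsPath) (hA₂ : A₂.IsPath) (hA : A₁.support.Disjoint A₂.support)
    {ζ : G.Walk w z} (hζ : ζ.IsPath) (hz : z ∈ A₁.support) (hw : w ∈ A₂.support)
    (hζ₁ : ∀ v ∈ ζ.support, v ∈ A₁.support → v = z)
    (hζ₂ : ∀ v ∈ ζ.support, v ∈ A₂.support → v = w) (hζh : s(x₁, y₁) ∉ ζ.edges) :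
    (((A₁.dropUntil z hz).append (cons h (A₂.takeUntil w hw))).append ζ).IsCycle := by
  have hp : ((A₁.dropUntil z hz).append (cons h (A₂.takeUntil w hw))).IsPath :=
    (isPath_append_cons_iff h).2 ⟨hA₁.dropUntil hz, hA₂.takeUntil hw,
      fun v hv₁ hv₂ => hA (A₁.support_dropUntil_subset_support hz hv₁)
        (A₂.support_takeUntil_subset_support hw hv₂)⟩
  refine hp.isCycle_append_of_inter_support hζ (fun v hv hvζ => ?_) ?_
  · rcases (mem_support_append_iff _ _).1 hv with hv | hv
    · exact .inl (hζ₁ v hvζ (A₁.support_dropUntil_subset_support hz hv))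
    rcases List.mem_cons.1 (by simpa using hv) with rfl | hv
    · exact .inl (hζ₁ v hvζ A₁.end_mem_support)
    · exact .inr (hζ₂ v hvζ (A₂.support_takeUntil_subset_support hw hv))
  · -- otherwise `z = x₁`, `w = y₁` and `ζ` would be the edge `x₁y₁` itself
    by_contra! hlen
    simp only [length_append, length_cons] at hlen
    obtain rfl := eq_of_length_eq_zero (p := A₁.dropUntil z hz) (by omega)
    obtain rfl := eq_of_length_eq_zero (p := A₂.takeUntil w hw) (by omega)
    exact absurd hlen.2 (not_le.2 (one_lt_length_of_notMem_edges h.ne' (by rwa [Sym2.eq_swap])))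

theorem IsCycle.exists_isCycle_cover_of_ear_between {A₁ : G.Walk y₂ x₁} {A₂ : G.Walk y₁ x₂}
    (h₁ : G.Adj x₁ y₁) (h₂ : G.Adj x₂ y₂) {c : G.Walk x₂ x₂} (hc : c.IsCycle)
    (hcA : c = cons h₂ (A₁.append (cons h₁ A₂))) {ζ : G.Walk z w} (hζ : ζ.IsPath)
    (hz : z ∈ A₁.support) (hw : w ∈ A₂.support) (hζ₁ : ∀ v ∈ ζ.support, v ∈ A₁.support → v = z)
    (hζ₂ : ∀ v ∈ ζ.support, v ∈ A₂.support → v = w) (hd₁ : s(x₁, y₁) ∉ ζ.edges)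
    (hd₂ : s(x₂, y₂) ∉ ζ.edges) :
    ∃ (c₁ : G.Walk z z) (c₂ : G.Walk w w), c₁.IsCycle ∧ c₂.IsCycle ∧
      s(x₁, y₁) ∈ c₁.edges ∧ s(x₂, y₂) ∈ c₂.edges ∧ c.edges ⊆ c₁.edges ++ c₂.edges ∧
      (∀ f ∈ c₁.edges, f ∈ ζ.edges ∨ f ∈ c.edges ∧ f ≠ s(x₂, y₂)) ∧
      (∀ f ∈ c₂.edges, f ∈ ζ.edges ∨ f ∈ c.edges ∧ f ≠ s(x₁, y₁)) := by
  subst hcA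
  obtain ⟨hP, hd₂P⟩ := (cons_isCycle_iff _ _).1 hc
  obtain ⟨hA₁, hA₂, hA⟩ := (isPath_append_cons_iff h₁).1 hP
  have hd₁A₁ : s(x₁, y₁) ∉ A₁.edges := fun h =>
    hA (A₁.snd_mem_support_of_mem_edges h) A₂.start_mem_support
  have hd₁A₂ : s(x₁, y₁) ∉ A₂.edges := fun h =>
    hA A₁.end_mem_support (A₂.fst_mem_support_of_mem_edges h)
  have hA₁e : ∀ f, f ∈ A₁.edges ↔ f ∈ (A₁.takeUntil z hz).edges ∨ f ∈ (A₁.dropUntil z hz).edges :=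
    fun f => by rw [← List.mem_append, ← edges_append, take_spec]
  have hA₂e : ∀ f, f ∈ A₂.edges ↔ f ∈ (A₂.takeUntil w hw).edges ∨ f ∈ (A₂.dropUntil w hw).edges :=
    fun f => by rw [← List.mem_append, ← edges_append, take_spec]
  refine ⟨_, _, isCycle_dropUntil_append_cons_takeUntil_append h₁ hA₁ hA₂ hA hζ.reverse hz hw
      (by simpa using hζ₁) (by simpa using hζ₂) (by simpa using hd₁),
    isCycle_dropUntil_append_cons_takeUntil_append h₂ hA₂ hA₁ hA.symm hζ hw hz hζ₂ hζ₁ hd₂,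
    by simp, by simp, fun f hf => ?_, fun f hf => ?_, fun f hf => ?_⟩
  · simp only [edges_cons, edges_append, List.mem_cons, List.mem_append, hA₁e, hA₂e] at hf
    simp only [edges_cons, edges_append, edges_reverse, List.mem_cons, List.mem_append,
      List.mem_reverse]
    tauto
  · simp only [edges_cons, edges_append, edges_reverse, List.mem_cons, List.mem_append,
      List.mem_reverse] at hf
    have hfP : f ∈ ζ.edges ∨ f ∈ (A₁.append (cons h₁ A₂)).edges := by
      simp only [edges_cons, edges_append, List.mem_cons, List.mem_append, hA₁e, hA₂e]
      tauto
    exact hfP.imp_right fun hfP => ⟨List.mem_cons_of_mem _ hfP, fun h => hd₂P (h ▸ hfP)⟩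
  · simp only [edges_cons, edges_append, List.mem_cons, List.mem_append] at hf
    rcases hf with (hf | rfl | hf) | hf
    · have hf := A₂.edges_dropUntil_subset_edges hw hf
      exact .inr ⟨by simp [hf], fun h => hd₁A₂ (h ▸ hf)⟩
    · exact .inr ⟨by simp, fun h => hd₂P (h ▸ by simp)⟩
    · have hf := A₁.edges_takeUntil_subset_edges hz hf
      exact .inr ⟨by simp [hf], fun h => hd₁A₁ (h ▸ hf)⟩
    · exact .inl hf

theorem IsCycle.exists_isCycle_inter_ssubset {D : Finset (Sym2 V)}
    (hH : (G.deleteEdges D).Preconnected) {c : G.Walk t t} (hc : c.IsCycle) {d₁ d₂ : Sym2 V}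
    (hd₁ : d₁ ∈ c.edges) (hd₂ : d₂ ∈ c.edges) (hd₁D : d₁ ∈ D) (hd₂D : d₂ ∈ D) (hd : d₁ ≠ d₂)
    {e : Sym2 V} (he : e ∈ c.edges) :
    ∃ (t' : V) (c' : G.Walk t' t'), c'.IsCycle ∧ e ∈ c'.edges ∧
      (c'.edges.toFinset ∩ D).Nonempty ∧ c'.edges.toFinset ∩ D ⊂ c.edges.toFinset ∩ D := by
  -- `c = Q d₂ R`, so `c` rotated to start at `d₂` is `d₂ R Q = d₂ A₁ d₁ A₂`
  obtain ⟨x₂, y₂, Q, h₂, R, rfl, rfl⟩ := exists_eq_append_cons_of_mem_edges hd₂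
  have hc₀ : (cons h₂ (R.append Q)).IsCycle := by simpa using hc.append_comm
  have hc₀e : ∀ f, f ∈ (cons h₂ (R.append Q)).edges ↔ f ∈ (Q.append (cons h₂ R)).edges := by
    simp only [edges_cons, edges_append, List.mem_cons, List.mem_append]
    tauto
  have hd₁' : d₁ ∈ (R.append Q).edges := by simpa [hd] using (hc₀e d₁).2 hd₁
  obtain ⟨x₁, y₁, A₁, h₁, A₂, rfl, hRQ⟩ := exists_eq_append_cons_of_mem_edges hd₁'
  obtain ⟨ω⟩ := hH x₁ y₁
  obtain ⟨z, hz, w, hw, ζ, hζ, hζω, hζ₁, hζ₂⟩ :=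
    (ω.mapLe (G.deleteEdges_le _)).exists_isPath_last_mem_first_mem
      (S := {v | v ∈ A₁.support}) (T := {v | v ∈ A₂.support}) A₁.end_mem_support
      A₂.start_mem_support
  have hζD : ∀ f ∈ ζ.edges, f ∉ D := fun f hf hfD => by
    have := ω.edges_subset_edgeSet (by simpa using hζω hf)
    simp [edgeSet_deleteEdges, hfD] at this
  obtain ⟨c₁, c₂, hc₁, hc₂, hd₁c₁, hd₂c₂, hcover, hc₁c, hc₂c⟩ :=
    hc₀.exists_isCycle_cover_of_ear_between h₁ h₂ (by rw [hRQ]) hζ hz hw hζ₁ hζ₂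
      (hζD _ · hd₁D) (hζD _ · hd₂D)
  rcases List.mem_append.1 (hcover ((hc₀e e).2 he)) with he | he
  · refine ⟨z, c₁, hc₁, he, ⟨_, Finset.mem_inter.2 ⟨List.mem_toFinset.2 hd₁c₁, hd₁D⟩⟩,
      List.toFinset_inter_ssubset (fun f hf hfD => ?_) hd₂ hd₂D⟩
    obtain hf | ⟨hf, hne⟩ := hc₁c f hf
    exacts [absurd hfD (hζD f hf), ⟨(hc₀e f).1 hf, hne⟩]
  · refine ⟨w, c₂, hc₂, he, ⟨_, Finset.mem_inter.2 ⟨List.mem_toFinset.2 hd₂c₂, hd₂D⟩⟩,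
      List.toFinset_inter_ssubset (fun f hf hfD => ?_) hd₁ hd₁D⟩
    obtain hf | ⟨hf, hne⟩ := hc₂c f hf
    exacts [absurd hfD (hζD f hf), ⟨(hc₀e f).1 hf, hne⟩]

end SimpleGraph.Walk

namespace TwoConnected

open Walk

variable {V : Type*} [Fintype V] {G : SimpleGraph V} {t u v : V}

theorem exists_walk_notMem_support (hG : TwoConnected G) {x y w : V} (hx : x ≠ w) (hy : y ≠ w) :
    ∃ p : G.Walk x y, w ∉ p.support := by
  obtain ⟨p⟩ := (hG.2 w).preconnected ⟨x, hx⟩ ⟨y, hy⟩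
  have hp : ∀ z ∈ (p.map (Embedding.induce {x | x ≠ w}).toHom).support, z ≠ w := by
    intro z hz
    rw [Walk.support_map, List.mem_map] at hz
    obtain ⟨⟨z, hz⟩, -, rfl⟩ := hz
    exact hz
  exact ⟨_, fun hw => hp w hw rfl⟩

theorem preconnected (hG : TwoConnected G) : G.Preconnected := fun x y => by
  obtain ⟨w, hwx, hwy⟩ := exists_ne_ne_of_three_le_card hG.1 x y
  obtain ⟨p, -⟩ := hG.exists_walk_notMem_support hwx.symm hwy.symm
  exact ⟨p⟩

theorem exists_isCycle_mem_edges [DecidableEq V] (hG : TwoConnected G) (h : G.Adj u v) :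
    ∃ c : G.Walk u u, c.IsCycle ∧ s(u, v) ∈ c.edges := by
  obtain ⟨w, hwu, hwv⟩ := exists_ne_ne_of_three_le_card hG.1 u v
  obtain ⟨p, hp⟩ := hG.exists_walk_notMem_support h.ne' hwu
  obtain ⟨q, hq⟩ := hG.exists_walk_notMem_support hwv h.ne
  refine ⟨cons h (p.append q).bypass,
    (cons_isCycle_iff _ _).2 ⟨(p.append q).bypass_isPath, fun he => ?_⟩, by simp⟩
  rcases List.mem_append.1 (by simpa using (p.append q).edges_bypass_subset_edges he) with he | he
  · exact hp (p.fst_mem_support_of_mem_edges he)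
  · exact hq (q.snd_mem_support_of_mem_edges he)

theorem exists_isCycle_cover_of_adj [DecidableEq V] (hG : TwoConnected G) {C : G.Walk t t}
    (hC : C.IsCycle) (hu : u ∈ C.support) (h : G.Adj u v) (huv : s(u, v) ∉ C.edges) :
    ∃ c₁ c₂ : G.Walk u u, c₁.IsCycle ∧ c₂.IsCycle ∧ s(u, v) ∈ c₁.edges ∧ s(u, v) ∈ c₂.edges ∧
      C.support ⊆ c₁.support ++ c₂.support ∧ C.edges ⊆ c₁.edges ++ c₂.edges := by
  by_cases hv : v ∈ C.support
  · obtain ⟨c₁, c₂, hc₁, hc₂, h₁, h₂, hs, he⟩ := hC.exists_isCycle_cover_of_ear hu hv h.ne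
      (r := cons h nil) (by simp [h.ne]) (by simp) (.inr huv)
    exact ⟨c₁, c₂, hc₁, hc₂, h₁ (by simp), h₂ (by simp), hs, he⟩
  obtain ⟨t₀, ht₀, ht₀u⟩ : ∃ t₀ ∈ C.support, t₀ ≠ u := by
    by_cases htu : t = u
    · exact ⟨C.snd, List.mem_of_mem_tail (snd_mem_tail_support hC.not_nil),
        htu ▸ (C.adj_snd hC.not_nil).ne'⟩
    · exact ⟨t, C.start_mem_support, htu⟩
  obtain ⟨ω, hω⟩ := hG.exists_walk_notMem_support h.ne' ht₀u
  obtain ⟨t', ht', ρ, hρ, hρs, -, hρC⟩ := ω.exists_isPath_first_mem (S := {x | x ∈ C.support}) ht₀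
  have huρ : u ∉ ρ.support := fun hu' => hω (hρs hu')
  obtain ⟨c₁, c₂, hc₁, hc₂, h₁, h₂, hs, he⟩ := hC.exists_isCycle_cover_of_ear hu ht'
    (fun he => huρ (he ▸ ρ.end_mem_support)) (r := cons h ρ) (hρ.cons huρ)
    (fun x hx hxC => by
      rcases List.mem_cons.1 (by simpa using hx) with rfl | hx
      exacts [.inl rfl, .inr (hρC x hx hxC)])
    (.inl (by
      have : ¬ ρ.Nil := not_nil_of_ne fun hvt => hv (hvt ▸ ht')
      simpa [not_nil_iff_lt_length] using this))
  exact ⟨c₁, c₂, hc₁, hc₂, h₁ (by simp), h₂ (by simp), hs, he⟩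

theorem exists_isCycle_mem_edges_mem_support [DecidableEq V] (hG : TwoConnected G) (h : G.Adj u v)
    (x : V) :
    ∃ (t : V) (c : G.Walk t t), c.IsCycle ∧ s(u, v) ∈ c.edges ∧ x ∈ c.support := by
  obtain ⟨p⟩ := hG.preconnected x u
  induction p with
  | nil =>
    obtain ⟨c, hc, he⟩ := hG.exists_isCycle_mem_edges h
    exact ⟨_, c, hc, he, c.start_mem_support⟩
  | @cons x y _ hxy p ih =>
    obtain ⟨t, C, hC, heC, hyC⟩ := ih h
    by_cases hx : x ∈ C.support
    · exact ⟨t, C, hC, heC, hx⟩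
    obtain ⟨c₁, c₂, hc₁, hc₂, h₁, h₂, -, hedges⟩ := hG.exists_isCycle_cover_of_adj hC hyC hxy.symm
      fun h => hx (C.snd_mem_support_of_mem_edges h)
    rcases List.mem_append.1 (hedges heC) with he | he
    exacts [⟨y, c₁, hc₁, he, c₁.snd_mem_support_of_mem_edges h₁⟩,
      ⟨y, c₂, hc₂, he, c₂.snd_mem_support_of_mem_edges h₂⟩]

theorem exists_isCycle_mem_edges_mem_edges [DecidableEq V] (hG : TwoConnected G) {e f : Sym2 V}
    (he : e ∈ G.edgeSet) (hf : f ∈ G.edgeSet) :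
    ∃ (t : V) (c : G.Walk t t), c.IsCycle ∧ e ∈ c.edges ∧ f ∈ c.edges := by
  induction e using Sym2.ind with | _ u v =>
  induction f using Sym2.ind with | _ a b =>
  obtain ⟨t, C, hC, heC, haC⟩ := hG.exists_isCycle_mem_edges_mem_support he a
  by_cases hfC : s(a, b) ∈ C.edges
  · exact ⟨t, C, hC, heC, hfC⟩
  obtain ⟨c₁, c₂, hc₁, hc₂, h₁, h₂, -, hedges⟩ := hG.exists_isCycle_cover_of_adj hC haC hf hfC
  rcases List.mem_append.1 (hedges heC) with he | he
  exacts [⟨a, c₁, hc₁, he, h₁⟩, ⟨a, c₂, hc₂, he, h₂⟩]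

end TwoConnected

/-- Let `G` be 2-vertex-connected and `D` a nonempty set of edges such that `G - D` is
connected. Then every edge of `G` belongs to a cycle containing exactly one edge of `D`. -/
theorem every_edge_in_D_cycle (G : SimpleGraph V) (h2 : TwoConnected G)
    (D : Finset (Sym2 V)) (hD : ↑D ⊆ G.edgeSet) (hne : D.Nonempty)
    (hconn : (G.deleteEdges ↑D).Connected) :
    ∀ e ∈ G.edgeSet, ∃ s : Finset (Sym2 V), IsCycleEdges G s ∧ (s ∩ D).card = 1 ∧ e ∈ s := by
  intro e he
  obtain ⟨d, hd⟩ := hne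
  obtain ⟨t₀, c₀, hc₀, hec₀, hdc₀⟩ := h2.exists_isCycle_mem_edges_mem_edges he (hD hd)
  obtain ⟨⟨t, c⟩, ⟨hc, hec, hcD⟩, hmin⟩ :=
    (measure fun c : Σ t, G.Walk t t => (c.2.edges.toFinset ∩ D).card).wf.has_min
      {c | c.2.IsCycle ∧ e ∈ c.2.edges ∧ (c.2.edges.toFinset ∩ D).Nonempty}
      ⟨⟨t₀, c₀⟩, hc₀, hec₀, d, by simp [hdc₀, hd]⟩
  refine ⟨c.edges.toFinset, ⟨t, c, hc, rfl⟩, ?_, List.mem_toFinset.2 hec⟩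
  by_contra hne1
  obtain ⟨d₁, hd₁, d₂, hd₂, hd₁₂⟩ :=
    Finset.one_lt_card.1 (lt_of_le_of_ne (b := (c.edges.toFinset ∩ D).card) hcD.card_pos
      (Ne.symm hne1))
  obtain ⟨hd₁c, hd₁D⟩ := Finset.mem_inter.1 hd₁
  obtain ⟨hd₂c, hd₂D⟩ := Finset.mem_inter.1 hd₂
  obtain ⟨t', c', hc', hec', hc'D, hss⟩ := hc.exists_isCycle_inter_ssubset hconn.preconnected
    (List.mem_toFinset.1 hd₁c) (List.mem_toFinset.1 hd₂c) hd₁D hd₂D hd₁₂ hec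
  exact hmin ⟨t', c'⟩ ⟨hc', hec', hc'D⟩ (Finset.card_lt_card hss)
end

section
/- LP rounding with bounded conflict number: let 𝒞 be a finite set, x : 𝒞 → ℝ≥0 a fractional packing (i.e., for every vertex v, the sum of x over cycles containing v is at most 1), and suppose that whenever x has nonempty support there exist C* in the support and a set W of at most 5 vertices of C* such that every cycle in the support sharing a vertex with C* contains a vertex of W. Then there exists a set of pairwise vertex-disjoint cycles of cardinality at least (1/5)·Σ_C x_C. -/
open Finset

/-- Auxiliary: the total weight of cycles whose support hits a set `W` of at most 5
vertices is at most 5. -/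
lemma lp_aux_sum_le_five {V : Type*} [DecidableEq V]
    (𝒞 : Finset (Finset V)) (x : Finset V → ℝ)
    (hx : ∀ C ∈ 𝒞, 0 ≤ x C)
    (hpack : ∀ v : V, ∑ C ∈ 𝒞.filter (fun C => v ∈ C), x C ≤ 1)
    (R : Finset (Finset V)) (hR : R ⊆ 𝒞) (W : Finset V) (hW : W.card ≤ 5)
    (hhit : ∀ C ∈ R, x C ≠ 0 → (C ∩ W).Nonempty) :
    ∑ C ∈ R, x C ≤ 5 := by
  classical
  have h1 : ∑ C ∈ R, x C = ∑ C ∈ R.filter (fun C => (C ∩ W).Nonempty), x C := by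
    rw [← Finset.sum_filter_add_sum_filter_not R (fun C => (C ∩ W).Nonempty)]
    have hz : ∑ C ∈ R.filter (fun C => ¬ (C ∩ W).Nonempty), x C = 0 := by
      apply Finset.sum_eq_zero
      intro C hC
      simp only [Finset.mem_filter] at hC
      by_contra h
      exact hC.2 (hhit C hC.1 h)
    rw [hz, add_zero]
  have hswap : ∑ w ∈ W, ∑ C ∈ 𝒞.filter (fun C => w ∈ C), x C
      = ∑ C ∈ 𝒞, ((W.filter (fun w => w ∈ C)).card : ℝ) * x C := by
    simp_rw [Finset.sum_filter]
    rw [Finset.sum_comm]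
    congr 1
    ext C
    rw [← Finset.sum_filter, Finset.sum_const, nsmul_eq_mul]
  have h2 : ∑ C ∈ R.filter (fun C => (C ∩ W).Nonempty), x C
      ≤ ∑ C ∈ 𝒞, ((W.filter (fun w => w ∈ C)).card : ℝ) * x C := by
    calc ∑ C ∈ R.filter (fun C => (C ∩ W).Nonempty), x C
        ≤ ∑ C ∈ R.filter (fun C => (C ∩ W).Nonempty),
            ((W.filter (fun w => w ∈ C)).card : ℝ) * x C := by
          apply Finset.sum_le_sum
          intro C hC
          simp only [Finset.mem_filter] at hC
          have hxC : 0 ≤ x C := hx C (hR hC.1)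
          have hcard : 1 ≤ (W.filter (fun w => w ∈ C)).card := by
            obtain ⟨w, hw⟩ := hC.2
            simp only [Finset.mem_inter] at hw
            exact Finset.card_pos.mpr ⟨w, Finset.mem_filter.mpr ⟨hw.2, hw.1⟩⟩
          have h1c : (1:ℝ) ≤ ((W.filter (fun w => w ∈ C)).card : ℝ) := by exact_mod_cast hcard
          nlinarith
      _ ≤ ∑ C ∈ 𝒞, ((W.filter (fun w => w ∈ C)).card : ℝ) * x C := by
          apply Finset.sum_le_sum_of_subset_of_nonneg
          · exact (Finset.filter_subset _ _).trans hR
          · intro C hC _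
            exact mul_nonneg (Nat.cast_nonneg _) (hx C hC)
  have h3 : ∑ w ∈ W, ∑ C ∈ 𝒞.filter (fun C => w ∈ C), x C ≤ (W.card : ℝ) := by
    calc ∑ w ∈ W, ∑ C ∈ 𝒞.filter (fun C => w ∈ C), x C
        ≤ ∑ _w ∈ W, (1 : ℝ) := Finset.sum_le_sum (fun w _ => hpack w)
      _ = (W.card : ℝ) := by simp
  have hWc : (W.card : ℝ) ≤ 5 := by exact_mod_cast hW
  linarith [h1, h2, hswap ▸ h3]

/-- LP rounding with bounded conflict number: let `𝒞` be a finite family of (nonempty)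
cycles, given by their vertex sets, and `x` a nonnegative fractional packing (for every
vertex `v`, the total `x`-value of cycles containing `v` is at most `1`). Suppose that
whenever the support (restricted to any remaining subfamily, as vertices get deleted
during the greedy procedure) is nonempty, there is a cycle `Cs` in the support and a set
`W` of at most `5` of its vertices such that every cycle of the support sharing a vertex
with `Cs` contains a vertex of `W`. Then there is a set of pairwise vertex-disjoint cycles
of cardinality at least `(1/5)·∑_C x_C`. -/
theorem lp_rounding_bounded_conflicts {V : Type*} [DecidableEq V]
    (𝒞 : Finset (Finset V)) (x : Finset V → ℝ)
    (hne : ∀ C ∈ 𝒞, C.Nonempty)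
    (hx : ∀ C ∈ 𝒞, 0 ≤ x C)
    (hpack : ∀ v : V, ∑ C ∈ 𝒞.filter (fun C => v ∈ C), x C ≤ 1)
    (heff : ∀ 𝒮 ⊆ 𝒞, (∃ C ∈ 𝒮, x C ≠ 0) →
      ∃ Cs ∈ 𝒮, x Cs ≠ 0 ∧ ∃ W ⊆ Cs, W.card ≤ 5 ∧
        ∀ C ∈ 𝒮, x C ≠ 0 → (C ∩ Cs).Nonempty → (C ∩ W).Nonempty) :
    ∃ M ⊆ 𝒞, (∀ C₁ ∈ M, ∀ C₂ ∈ M, C₁ ≠ C₂ → Disjoint C₁ C₂) ∧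
      (1 / 5 : ℝ) * ∑ C ∈ 𝒞, x C ≤ (M.card : ℝ) := by
  classical
  induction 𝒞 using Finset.strongInduction with
  | _ 𝒞 ih =>
  by_cases hsupp : ∃ C ∈ 𝒞, x C ≠ 0
  · -- greedy step
    obtain ⟨Cs, hCs𝒞, hCsne, W, hWCs, hWcard, hWhit⟩ := heff 𝒞 (Finset.Subset.refl _) hsupp
    set 𝒞' : Finset (Finset V) := 𝒞.filter (fun C => ¬ (C ∩ Cs).Nonempty) with h𝒞'
    have hsub : 𝒞' ⊆ 𝒞 := Finset.filter_subset _ _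
    have hCsnot : Cs ∉ 𝒞' := by
      simp only [h𝒞', Finset.mem_filter, not_and, not_not]
      intro _
      rw [Finset.inter_self]
      exact hne Cs hCs𝒞
    have hssub : 𝒞' ⊂ 𝒞 := Finset.ssubset_iff_of_subset hsub |>.mpr ⟨Cs, hCs𝒞, hCsnot⟩
    have hpack' : ∀ v : V, ∑ C ∈ 𝒞'.filter (fun C => v ∈ C), x C ≤ 1 := by
      intro v
      refine le_trans ?_ (hpack v)
      apply Finset.sum_le_sum_of_subset_of_nonneg
      · exact Finset.filter_subset_filter _ hsub
      · intro C hC _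
        exact hx C ((Finset.filter_subset _ _ hC))
    obtain ⟨M', hM'sub, hM'disj, hM'card⟩ :=
      ih 𝒞' hssub (fun C hC => hne C (hsub hC)) (fun C hC => hx C (hsub hC)) hpack'
        (fun 𝒮 h𝒮 => heff 𝒮 (h𝒮.trans hsub))
    have hCsM' : Cs ∉ M' := fun h => hCsnot (hM'sub h)
    refine ⟨insert Cs M', ?_, ?_, ?_⟩
    · intro C hC
      rcases Finset.mem_insert.mp hC with h | h
      · exact h ▸ hCs𝒞
      · exact hsub (hM'sub h)
    · -- pairwise disjoint
      have hdisjCs : ∀ C ∈ M', Disjoint C Cs := by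
        intro C hC
        have := hM'sub hC
        simp only [h𝒞', Finset.mem_filter, Finset.not_nonempty_iff_eq_empty] at this
        exact Finset.disjoint_iff_inter_eq_empty.mpr this.2
      intro C₁ h₁ C₂ h₂ hne12
      rcases Finset.mem_insert.mp h₁ with h₁' | h₁' <;>
        rcases Finset.mem_insert.mp h₂ with h₂' | h₂'
      · exact absurd (h₁'.trans h₂'.symm) hne12
      · exact h₁' ▸ (hdisjCs C₂ h₂').symm
      · exact h₂' ▸ (hdisjCs C₁ h₁')
      · exact hM'disj C₁ h₁' C₂ h₂' hne12
    · -- cardinality bound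
      rw [Finset.card_insert_of_notMem hCsM']
      have hsplit : ∑ C ∈ 𝒞, x C
          = ∑ C ∈ 𝒞.filter (fun C => (C ∩ Cs).Nonempty), x C + ∑ C ∈ 𝒞', x C := by
        rw [h𝒞', Finset.sum_filter_add_sum_filter_not]
      have hR : ∑ C ∈ 𝒞.filter (fun C => (C ∩ Cs).Nonempty), x C ≤ 5 := by
        apply lp_aux_sum_le_five 𝒞 x hx hpack _ (Finset.filter_subset _ _) W hWcard
        intro C hC hCne
        simp only [Finset.mem_filter] at hC
        exact hWhit C hC.1 hCne hC.2
      push_cast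
      rw [hsplit]
      linarith [hM'card]
  · -- zero support: total sum is zero
    push_neg at hsupp
    refine ⟨∅, Finset.empty_subset _, by simp, ?_⟩
    have : ∑ C ∈ 𝒞, x C = 0 := Finset.sum_eq_zero hsupp
    simp [this]
end

section
/- Fractional local ratio for hypergraph matching: let 𝒢 = (𝒱, ℰ) be a finite hypergraph, x : ℰ → ℝ≥0 a fractional matching (Σ_{e ∋ v} x(e) ≤ 1 for all v), k ∈ ℕ, and ℰ = {e₁, …, e_m} an ordering such that for each i, Σ{ x(e') : e' ∈ {e_i, …, e_m}, e' ∩ e_i ≠ ∅ } ≤ k. Then for any weights w : ℰ → ℝ≥0 there exists a matching M ⊆ ℰ (pairwise disjoint hyperedges) with w(M) ≥ (1/k) Σ_e w(e) x(e). -/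
/-!
Local ratio. Let `a` be the first hyperedge of positive weight. Subtracting `w a` from the
weight of every hyperedge `j ≥ a` meeting `a` changes `∑ w x` by at most `k · w a`, by the
ordering hypothesis, and makes the weight of `a` zero. The matching `M'` that induction gives
for the reduced weights consists of positive hyperedges after `a`: if it meets a neighbour of `a`, that neighbour
already pays `w a` back; otherwise `a` can be added to it.
-/

open Finset

section LocalRatio

variable {ι V : Type*} [Fintype ι] [LinearOrder ι] [DecidableEq V]

def laterNeighbors (e : ι → Finset V) (i : ι) : Finset ι :=
  univ.filter fun j => i ≤ j ∧ (e i ∩ e j).Nonempty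

/-- Unlike the paper, which subtracts `w a` on all of `N[e a]`, only the later neighbours are
reduced: earlier ones may carry fractional value that the ordering hypothesis does not bound. -/
def residualWeight (e : ι → Finset V) (a : ι) (w : ι → ℝ) (j : ι) : ℝ :=
  w j - if j ∈ laterNeighbors e a then w a else 0

variable {e : ι → Finset V} {a : ι} {w : ι → ℝ}

lemma residualWeight_le (ha : 0 ≤ w a) (j : ι) : residualWeight e a w j ≤ w j := by
  unfold residualWeight
  split_ifs <;> linarith

lemma residualWeight_self (he : (e a).Nonempty) : residualWeight e a w a = 0 := by
  simp [residualWeight, laterNeighbors, he]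

lemma residualWeight_of_not_mem {j : ι} (hj : j ∉ laterNeighbors e a) :
    residualWeight e a w j = w j := by
  simp [residualWeight, hj]

lemma sum_mul_eq_sum_residualWeight_mul_add (x : ι → ℝ) :
    ∑ i, w i * x i =
      ∑ i, residualWeight e a w i * x i + w a * ∑ j ∈ laterNeighbors e a, x j := by
  simp only [residualWeight, sub_mul, ite_mul, zero_mul, sum_sub_distrib, sum_ite_mem,
    univ_inter, mul_sum]
  ring

lemma sum_residualWeight_add_le {M : Finset ι} (ha : 0 ≤ w a) {j : ι} (hjM : j ∈ M)
    (hj : j ∈ laterNeighbors e a) :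
    ∑ i ∈ M, residualWeight e a w i + w a ≤ ∑ i ∈ M, w i := by
  have hsplit : ∑ i ∈ M, w i =
      ∑ i ∈ M, residualWeight e a w i + ∑ i ∈ M, if i ∈ laterNeighbors e a then w a else 0 := by
    rw [← sum_add_distrib]
    exact sum_congr rfl fun i _ => by simp [residualWeight]
  have hpay : w a ≤ ∑ i ∈ M, if i ∈ laterNeighbors e a then w a else 0 := by
    simpa [hj] using single_le_sum (f := fun i => if i ∈ laterNeighbors e a then w a else 0)
      (fun i _ => by split_ifs <;> simp [ha]) hjM
  linarith

lemma pairwiseDisjoint_insert_of_lt {M : Finset ι} (hM : (M : Set ι).PairwiseDisjoint e)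
    (hlt : ∀ j ∈ M, a < j) (hN : ∀ j ∈ M, j ∉ laterNeighbors e a) :
    ((insert a M : Finset ι) : Set ι).PairwiseDisjoint e := by
  rw [coe_insert]
  refine hM.insert fun j hj _ => ?_
  have hj' := hN j hj
  simp only [laterNeighbors, mem_filter, mem_univ, true_and, not_and] at hj'
  exact disjoint_iff_inter_eq_empty.2 <|
    not_nonempty_iff_eq_empty.1 (hj' (hlt j (mem_coe.1 hj)).le)

/-- Weights of any sign are allowed, since the reduction makes some of them negative. -/
theorem exists_pairwiseDisjoint_sum_mul_le {x : ι → ℝ} {k : ℝ}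
    (he : ∀ i, (e i).Nonempty) (hx : ∀ i, 0 ≤ x i) (hk : 0 ≤ k)
    (horder : ∀ i, ∑ j ∈ laterNeighbors e i, x j ≤ k) (S : Finset ι) :
    ∀ w : ι → ℝ, (∀ i, 0 < w i → i ∈ S) →
      ∃ M : Finset ι, (∀ i ∈ M, 0 < w i) ∧ (M : Set ι).PairwiseDisjoint e ∧
        ∑ i, w i * x i ≤ k * ∑ i ∈ M, w i := by
  induction S using Finset.induction_on_min with
  | empty =>
    intro w hw
    refine ⟨∅, by simp, by simp, ?_⟩
    simpa using sum_nonpos fun i _ =>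
      mul_nonpos_of_nonpos_of_nonneg (not_lt.1 fun h => by simpa using hw i h) (hx i)
  | insert a s hlt ih =>
    intro w hw
    rcases le_or_gt (w a) 0 with hwa | hwa
    · refine ih w fun i hi => (mem_insert.1 (hw i hi)).resolve_left ?_
      rintro rfl
      linarith
    have hpos' : ∀ i, 0 < residualWeight e a w i → i ∈ s := by
      intro i hi
      refine (mem_insert.1 (hw i (hi.trans_le (residualWeight_le hwa.le i)))).resolve_left ?_
      rintro rfl
      simp [residualWeight_self (he i)] at hi
    obtain ⟨M, hMpos, hM, hbound⟩ := ih _ hpos'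
    have hMlt : ∀ j ∈ M, a < j := fun j hj => hlt j (hpos' j (hMpos j hj))
    have hreduce : ∑ i, w i * x i ≤ k * (∑ i ∈ M, residualWeight e a w i + w a) := by
      rw [sum_mul_eq_sum_residualWeight_mul_add (e := e) (a := a), mul_add, mul_comm k (w a)]
      exact add_le_add hbound (mul_le_mul_of_nonneg_left (horder a) hwa.le)
    by_cases hmeet : ∃ j ∈ M, j ∈ laterNeighbors e a
    · obtain ⟨j, hjM, hj⟩ := hmeet
      refine ⟨M, fun i hi => (hMpos i hi).trans_le (residualWeight_le hwa.le i), hM, ?_⟩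
      exact hreduce.trans (mul_le_mul_of_nonneg_left (sum_residualWeight_add_le hwa.le hjM hj) hk)
    · push Not at hmeet
      have haM : a ∉ M := fun h => lt_irrefl a (hMlt a h)
      refine ⟨insert a M, ?_, pairwiseDisjoint_insert_of_lt hM hMlt hmeet, ?_⟩
      · simp only [mem_insert, forall_eq_or_imp]
        exact ⟨hwa, fun i hi => (hMpos i hi).trans_le (residualWeight_le hwa.le i)⟩
      · rwa [sum_insert haM, add_comm, ← sum_congr rfl fun i hi =>
          residualWeight_of_not_mem (hmeet i hi)]

end LocalRatio

theorem fractional_local_ratio_general {𝒱 : Type*} [DecidableEq 𝒱]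
    (m k : ℕ) (e : Fin m → Finset 𝒱) (x w : Fin m → ℝ)
    (hedges : ∀ i, (e i).Nonempty)
    (hx : ∀ i, 0 ≤ x i)
    (horder : ∀ i : Fin m,
      ∑ j ∈ Finset.univ.filter (fun j => i ≤ j ∧ (e i ∩ e j).Nonempty), x j ≤ (k : ℝ)) :
    ∃ M : Finset (Fin m),
      (∀ i ∈ M, ∀ j ∈ M, i ≠ j → Disjoint (e i) (e j)) ∧
      (1 / (k : ℝ)) * ∑ i, w i * x i ≤ ∑ i ∈ M, w i := by
  obtain ⟨M, hpos, hM, hbound⟩ := exists_pairwiseDisjoint_sum_mul_le hedges hx k.cast_nonneg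
    horder univ w fun i _ => mem_univ i
  refine ⟨M, hM, ?_⟩
  rcases k.eq_zero_or_pos with rfl | hk
  · simpa using sum_nonneg fun i hi => (hpos i hi).le
  · rw [one_div_mul_eq_div, div_le_iff₀ (by positivity), mul_comm]
    exact hbound

/-- Fractional local ratio for hypergraph matching (Chan–Lau): let `e : Fin m → Finset 𝒱`
be the (nonempty) hyperedges of a finite hypergraph, `x` a nonnegative fractional matching
(`∑_{i : v ∈ e i} x i ≤ 1` for every vertex `v`), and suppose the ordering of the
hyperedges satisfies `∑ { x j : j ≥ i, e j ∩ e i ≠ ∅ } ≤ k` for each `i`. Then for any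
nonnegative weights `w` there is a matching `M` (pairwise disjoint hyperedges) with
`w(M) ≥ (1/k) ∑ i, w i · x i`. -/
theorem fractional_local_ratio {𝒱 : Type*} [DecidableEq 𝒱] [Fintype 𝒱]
    (m k : ℕ) (e : Fin m → Finset 𝒱) (x w : Fin m → ℝ)
    (hedges : ∀ i, (e i).Nonempty)
    (hx : ∀ i, 0 ≤ x i) (hw : ∀ i, 0 ≤ w i)
    (hmatch : ∀ v : 𝒱, ∑ i ∈ Finset.univ.filter (fun i => v ∈ e i), x i ≤ 1)
    (horder : ∀ i : Fin m,
      ∑ j ∈ Finset.univ.filter (fun j => i ≤ j ∧ (e i ∩ e j).Nonempty), x j ≤ (k : ℝ)) :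
    ∃ M : Finset (Fin m),
      (∀ i ∈ M, ∀ j ∈ M, i ≠ j → Disjoint (e i) (e j)) ∧
      (1 / (k : ℝ)) * ∑ i, w i * x i ≤ ∑ i ∈ M, w i :=
  fractional_local_ratio_general m k e x w hedges hx horder
end

section
/- Cyclic-interval rounding: let C₁, …, C_k be objects with weights x₁, …, x_k ≥ 0 arranged in cyclic order so that for every 'conflict point' z, the set of indices i with z ∈ C_i forms a cyclic interval, and let X = Σ x_i. Then for ℓ = max{1, ⌊X⌋} there exists an offset p ∈ [0, X) such that the ℓ objects selected by the rule 'C_i is selected iff Σ_{j<i} x_j ≤ (p + t) mod X < Σ_{j≤i} x_j for some t ∈ {0,…,ℓ−1}' are pairwise disjoint and, for the best offset, the selected set has weight (with weights w_i ≥ 0) at least (ℓ/X) Σ w_i x_i > (1/2) Σ w_i x_i. -/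
/-!
Lay the objects out as consecutive arcs `I i = [S i, S i + x i)` of the circle `ℝ / Xℤ` and mark
the `ℓ` points `p, p + 1, …, p + ℓ - 1`. As `ℓ ≤ X` (unless `ℓ = 1`), two marks are at cyclic
distance at least `1`, so a set that fits into a cyclic window of length `1` holds at most one
mark. Hence each arc (of length `≤ 1`) is hit at most once, and two selected objects sharing a
conflict point would be hit by the same mark, which is impossible for disjoint arcs. For `p`
uniform on `[0, X)` the arc `I i` is hit `ℓ x i / X` times on average, so some offset selects
weight at least `(ℓ / X) ∑ w i x i`; finally `2ℓ ≥ 1 + ⌊X⌋ > X`.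
-/

open Finset MeasureTheory

/-- The residue of `y` modulo the circumference `X` (representative in `[0, X)`). -/
noncomputable def cyclicMod (X y : ℝ) : ℝ := y - X * ⌊y / X⌋

section CyclicMod
variable {X : ℝ}

lemma cyclicMod_eq_mul_fract (hX : X ≠ 0) (y : ℝ) : cyclicMod X y = X * Int.fract (y / X) := by
  rw [cyclicMod, Int.fract, mul_sub, mul_div_cancel₀ y hX]

lemma cyclicMod_add_self (hX : 0 < X) (y : ℝ) : cyclicMod X (y + X) = cyclicMod X y := by
  rw [cyclicMod_eq_mul_fract hX.ne', cyclicMod_eq_mul_fract hX.ne', add_div, div_self hX.ne',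
    Int.fract_add_one]

lemma cyclicMod_eq_self (hX : 0 < X) {y : ℝ} (hy : y ∈ Set.Ico 0 X) : cyclicMod X y = y := by
  rw [cyclicMod_eq_mul_fract hX.ne', Int.fract_eq_self.2, mul_div_cancel₀ y hX.ne']
  exact ⟨div_nonneg hy.1 hX.le, (div_lt_one hX).2 hy.2⟩

lemma measurable_cyclicMod (hX : X ≠ 0) : Measurable (cyclicMod X) := by
  rw [funext (cyclicMod_eq_mul_fract hX)]
  fun_prop

lemma exists_cyclicMod_sub_cyclicMod (X p : ℝ) (t t' : ℕ) :
    ∃ m : ℤ, cyclicMod X (p + t) - cyclicMod X (p + t') = (t - t' : ℝ) + m * X :=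
  ⟨⌊(p + t') / X⌋ - ⌊(p + t) / X⌋, by rw [cyclicMod, cyclicMod]; push_cast; ring⟩

lemma setIntegral_Ico_comp_cyclicMod_add (hX : 0 < X) (f : ℝ → ℝ) (c : ℝ) :
    ∫ p in Set.Ico 0 X, f (cyclicMod X (p + c)) = ∫ y in Set.Ico 0 X, f y := by
  have hIco (g : ℝ → ℝ) : ∫ y in Set.Ico 0 X, g y = ∫ y in 0..X, g y := by
    rw [intervalIntegral.integral_of_le hX.le, integral_Ico_eq_integral_Ioo,
      integral_Ioc_eq_integral_Ioo]
  have hper : Function.Periodic (fun y => f (cyclicMod X y)) X := fun y => by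
    simp only [cyclicMod_add_self hX]
  calc ∫ p in Set.Ico 0 X, f (cyclicMod X (p + c))
      = ∫ y in c..c + X, f (cyclicMod X y) := by
        rw [hIco, intervalIntegral.integral_comp_add_right (fun y => f (cyclicMod X y)), zero_add,
          add_comm]
    _ = ∫ y in 0..0 + X, f (cyclicMod X y) := hper.intervalIntegral_add_eq c 0
    _ = ∫ y in Set.Ico 0 X, f y := by
        rw [zero_add, ← hIco]
        exact setIntegral_congr_fun measurableSet_Ico fun y hy => by rw [cyclicMod_eq_self hX hy]

end CyclicMod

lemma Int.eq_zero_of_abs_add_mul_lt_one {d m : ℤ} {X : ℝ} (hd : |(d : ℝ)| + 1 ≤ X)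
    (h : |d + m * X| < 1) : d = 0 := by
  rcases eq_or_ne m 0 with rfl | hm
  · rw [Int.cast_zero, zero_mul, add_zero, ← Int.cast_abs, ← Int.cast_one, Int.cast_lt] at h
    exact Int.abs_lt_one_iff.1 h
  · have hm1 : (1 : ℝ) ≤ |(m : ℝ)| := by exact_mod_cast Int.one_le_abs hm
    have hmX : X ≤ |m * X| := by
      rw [abs_mul, abs_of_nonneg (by linarith [abs_nonneg (d : ℝ)] : (0 : ℝ) ≤ X)]
      nlinarith [abs_nonneg (d : ℝ)]
    have := abs_sub_abs_le_abs_add (m * X : ℝ) d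
    rw [add_comm] at h
    linarith

lemma eq_of_abs_sub_add_mul_lt_one {X : ℝ} {ℓ t t' : ℕ} (hℓ : ℓ ≤ max 1 ⌊X⌋₊)
    (ht : t < ℓ) (ht' : t' < ℓ) {m : ℤ} (h : |(t - t' : ℝ) + m * X| < 1) : t = t' := by
  by_contra hne
  have hℓX : (ℓ : ℝ) ≤ X := (Nat.le_floor_iff' (by omega)).1 (by omega)
  have hdℓ : |(t - t' : ℤ)| + 1 ≤ (ℓ : ℤ) := by
    rw [← le_sub_iff_add_le, abs_le]; omega
  have hd : ((t - t' : ℤ) : ℝ) = t - t' := by push_cast; ring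
  have := Int.eq_zero_of_abs_add_mul_lt_one (d := t - t') (m := m) (X := X)
    (by rw [← Int.cast_abs]; exact le_trans (by exact_mod_cast hdℓ) hℓX) (by rwa [hd])
  omega

section HitCount
variable {X : ℝ} {ℓ : ℕ} {s : Set ℝ}

lemma eq_of_abs_cyclicMod_sub_add_mul_lt_one (hℓ : ℓ ≤ max 1 ⌊X⌋₊) {t t' : ℕ} (ht : t < ℓ)
    (ht' : t' < ℓ) {p : ℝ} {n : ℤ}
    (h : |cyclicMod X (p + t) - cyclicMod X (p + t') + n * X| < 1) : t = t' := by
  obtain ⟨m, hm⟩ := exists_cyclicMod_sub_cyclicMod X p t t'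
  refine eq_of_abs_sub_add_mul_lt_one hℓ ht ht' (m := m + n) ?_
  rw [hm] at h
  push_cast
  rwa [add_mul, ← add_assoc]

noncomputable def hitCount (X : ℝ) (ℓ : ℕ) (s : Set ℝ) (p : ℝ) : ℝ :=
  ∑ t ∈ range ℓ, s.indicator 1 (cyclicMod X (p + t))

lemma hitCount_eq_zero {p : ℝ} (h : ¬∃ t ∈ range ℓ, cyclicMod X (p + t) ∈ s) :
    hitCount X ℓ s p = 0 :=
  sum_eq_zero fun t ht => Set.indicator_of_notMem (fun hs => h ⟨t, ht, hs⟩) _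

lemma hitCount_eq_one (hℓ : ℓ ≤ max 1 ⌊X⌋₊) (hs : ∀ u ∈ s, ∀ v ∈ s, |u - v| < 1) {p : ℝ}
    (h : ∃ t ∈ range ℓ, cyclicMod X (p + t) ∈ s) : hitCount X ℓ s p = 1 := by
  obtain ⟨t, ht, hts⟩ := h
  rw [hitCount, sum_eq_single_of_mem t ht, Set.indicator_of_mem hts, Pi.one_apply]
  intro t' ht' hne
  refine Set.indicator_of_notMem (fun ht's => hne ?_) _
  refine eq_of_abs_cyclicMod_sub_add_mul_lt_one hℓ (mem_range.1 ht') (mem_range.1 ht)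
    (p := p) (n := 0) ?_
  simpa using hs _ ht's _ hts

lemma integrableOn_indicator_cyclicMod_add (hX : X ≠ 0) (hs : MeasurableSet s) (c : ℝ)
    {A : Set ℝ} (hA : volume A ≠ ⊤) :
    IntegrableOn (fun p => s.indicator (1 : ℝ → ℝ) (cyclicMod X (p + c))) A := by
  refine Measure.integrableOn_of_bounded (M := 1) hA
    ((measurable_const.indicator hs).comp ((measurable_cyclicMod hX).comp
      (measurable_add_const c))).aestronglyMeasurable (ae_of_all _ fun p => ?_)
  exact (norm_indicator_le_norm_self _ _).trans (by simp)

lemma integrableOn_hitCount (hX : X ≠ 0) (hs : MeasurableSet s) {A : Set ℝ}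
    (hA : volume A ≠ ⊤) : IntegrableOn (hitCount X ℓ s) A :=
  integrable_finsetSum _ fun t _ => integrableOn_indicator_cyclicMod_add hX hs (t : ℝ) hA

lemma setIntegral_Ico_hitCount (hX : 0 < X) (hs : MeasurableSet s) (hsX : s ⊆ Set.Ico 0 X) :
    ∫ p in Set.Ico 0 X, hitCount X ℓ s p = ℓ * volume.real s := by
  have hIco : volume (Set.Ico 0 X) ≠ ⊤ := measure_Ico_lt_top.ne
  unfold hitCount
  rw [integral_finsetSum (range ℓ) fun (t : ℕ) _ =>
    integrableOn_indicator_cyclicMod_add hX.ne' hs (t : ℝ) hIco]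
  simp_rw [setIntegral_Ico_comp_cyclicMod_add hX, integral_indicator_one hs,
    measureReal_restrict_apply hs, Set.inter_eq_left.2 hsX, sum_const, card_range,
    nsmul_eq_mul]

end HitCount

section Selection
variable {ι : Type*} [Fintype ι] {X : ℝ} {ℓ : ℕ} {I : ι → Set ℝ} {p : ℝ}

open Classical in
noncomputable def selection (X : ℝ) (ℓ : ℕ) (I : ι → Set ℝ) (p : ℝ) : Finset ι :=
  {i | ∃ t ∈ range ℓ, cyclicMod X (p + t) ∈ I i}

lemma mem_selection {i : ι} :
    i ∈ selection X ℓ I p ↔ ∃ t ∈ range ℓ, cyclicMod X (p + t) ∈ I i := by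
  simp [selection]

lemma sum_mul_hitCount_eq_sum_selection (hℓ : ℓ ≤ max 1 ⌊X⌋₊)
    (hI : ∀ i, ∀ u ∈ I i, ∀ v ∈ I i, |u - v| < 1) (w : ι → ℝ) :
    ∑ i, w i * hitCount X ℓ (I i) p = ∑ i ∈ selection X ℓ I p, w i := by
  classical
  rw [selection, sum_filter]
  refine sum_congr rfl fun i _ => ?_
  split_ifs with h
  · rw [hitCount_eq_one hℓ (hI i) h, mul_one]
  · rw [hitCount_eq_zero h, mul_zero]

lemma exists_offset_le_sum_selection (hX : 0 < X) (hℓ : ℓ ≤ max 1 ⌊X⌋₊)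
    (hmeas : ∀ i, MeasurableSet (I i)) (hsub : ∀ i, I i ⊆ Set.Ico 0 X)
    (hI : ∀ i, ∀ u ∈ I i, ∀ v ∈ I i, |u - v| < 1) (w : ι → ℝ) :
    ∃ p ∈ Set.Ico 0 X,
      ℓ / X * ∑ i, w i * volume.real (I i) ≤ ∑ i ∈ selection X ℓ I p, w i := by
  have hIco : volume (Set.Ico 0 X) ≠ ⊤ := measure_Ico_lt_top.ne
  obtain ⟨p, hp, hle⟩ := exists_setAverage_le (by simpa using hX) hIco
    (integrable_finsetSum _ fun i _ =>
      (integrableOn_hitCount (ℓ := ℓ) hX.ne' (hmeas i) hIco).const_mul (w i))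
  refine ⟨p, hp, ?_⟩
  rw [← sum_mul_hitCount_eq_sum_selection hℓ hI]
  refine le_of_eq_of_le ?_ hle
  rw [setAverage_eq, integral_finsetSum _ fun i _ =>
      (integrableOn_hitCount hX.ne' (hmeas i) hIco).const_mul (w i)]
  simp_rw [integral_const_mul, setIntegral_Ico_hitCount hX (hmeas _) (hsub _),
    Real.volume_real_Ico_of_le hX.le, sub_zero, smul_eq_mul, mul_sum]
  refine sum_congr rfl fun i _ => ?_
  field_simp

lemma selection_pairwise_not_conflict {Z : Type*} (mem : Z → ι → Prop)
    (hℓ : ℓ ≤ max 1 ⌊X⌋₊) (hdisj : Pairwise (Function.onFun Disjoint I))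
    (hwin : ∀ z, ∃ a : ℝ, ∀ i, mem z i → ∀ y ∈ I i,
      ∃ n : ℤ, a ≤ y + n * X ∧ y + n * X < a + 1) :
    ∀ i ∈ selection X ℓ I p, ∀ j ∈ selection X ℓ I p, i ≠ j → ∀ z, ¬(mem z i ∧ mem z j) := by
  rintro i hi j hj hij z ⟨hzi, hzj⟩
  obtain ⟨ti, hti, hyi⟩ := mem_selection.1 hi
  obtain ⟨tj, htj, hyj⟩ := mem_selection.1 hj
  obtain ⟨a, ha⟩ := hwin z
  obtain ⟨ni, hni⟩ := ha i hzi _ hyi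
  obtain ⟨nj, hnj⟩ := ha j hzj _ hyj
  obtain rfl : ti = tj := eq_of_abs_cyclicMod_sub_add_mul_lt_one hℓ (mem_range.1 hti)
    (mem_range.1 htj) (n := ni - nj) (by rw [abs_lt]; push_cast; constructor <;> linarith)
  exact Set.disjoint_left.1 (hdisj hij) hyi hyj

end Selection

section PrefixSums
variable {α M : Type*} [LinearOrder α] [LocallyFiniteOrderBot α]
  [AddCommMonoid M] [LinearOrder M] [IsOrderedAddMonoid M] {x : α → M}

lemma sum_Iio_add_le_sum_Iio (hx : ∀ i, 0 ≤ x i) {i j : α} (hij : i < j) :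
    ∑ m ∈ Iio i, x m + x i ≤ ∑ m ∈ Iio j, x m := by
  rw [sum_Iio_add_eq_sum_Iic]
  exact sum_le_sum_of_subset_of_nonneg (fun m hm => mem_Iio.2 ((mem_Iic.1 hm).trans_lt hij))
    fun m _ _ => hx m

lemma sum_Iio_add_le_sum [Fintype α] (hx : ∀ i, 0 ≤ x i) (i : α) :
    ∑ m ∈ Iio i, x m + x i ≤ ∑ m, x m := by
  rw [sum_Iio_add_eq_sum_Iic]
  exact sum_le_sum_of_subset_of_nonneg (subset_univ _) fun m _ _ => hx m

lemma pairwise_disjoint_Ico_sum_Iio (hx : ∀ i, 0 ≤ x i) :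
    Pairwise (Function.onFun Disjoint fun i =>
      Set.Ico (∑ m ∈ Iio i, x m) (∑ m ∈ Iio i, x m + x i)) :=
  (pairwise_disjoint_on _).2 fun _ _ hij => Set.Ico_disjoint_Ico_same.mono_right
    (Set.Ico_subset_Ico_left (sum_Iio_add_le_sum_Iio hx hij))

end PrefixSums

lemma half_lt_max_one_floor_div {X : ℝ} (hX : 0 < X) : 1 / 2 < (max 1 ⌊X⌋₊ : ℕ) / X := by
  rw [lt_div_iff₀ hX]
  have h1 : (1 : ℝ) ≤ (max 1 ⌊X⌋₊ : ℕ) := by exact_mod_cast le_max_left _ _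
  have h2 : (⌊X⌋₊ : ℝ) ≤ (max 1 ⌊X⌋₊ : ℕ) := by exact_mod_cast le_max_right _ _
  linarith [Nat.lt_floor_add_one X]

theorem cyclic_interval_rounding_general (k : ℕ) (x w : Fin k → ℝ)
    (hx0 : ∀ i, 0 ≤ x i) (hx1 : ∀ i, x i ≤ 1)
    (X : ℝ) (hX : X = ∑ i, x i) (hXpos : 0 < X)
    (ℓ : ℕ) (hℓ : ℓ = max 1 ⌊X⌋₊)
    (S : Fin k → ℝ)
    (hS : ∀ i : Fin k, S i = ∑ j ∈ Finset.univ.filter (fun j => j < i), x j)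
    (Z : Type*) (mem : Z → Fin k → Prop)
    (hinterval : ∀ z : Z, ∃ a : ℝ, ∀ i, mem z i →
      ∀ y : ℝ, S i ≤ y → y < S i + x i →
        ∃ n : ℤ, a ≤ y + n * X ∧ y + n * X < a + 1) :
    ∃ (p : ℝ) (sel : Finset (Fin k)),
      0 ≤ p ∧ p < X ∧
      (∀ i : Fin k, i ∈ sel ↔ ∃ t ∈ Finset.range ℓ,
        S i ≤ cyclicMod X (p + (t : ℝ)) ∧ cyclicMod X (p + (t : ℝ)) < S i + x i) ∧
      (∀ i ∈ sel, ∀ j ∈ sel, i ≠ j → ∀ z : Z, ¬(mem z i ∧ mem z j)) ∧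
      (1 / 2 : ℝ) < (ℓ : ℝ) / X ∧
      (ℓ : ℝ) / X * ∑ i, w i * x i ≤ ∑ i ∈ sel, w i := by
  obtain rfl : S = fun i => ∑ j ∈ Iio i, x j := funext fun i => by rw [hS, filter_gt_eq_Iio]
  set I : Fin k → Set ℝ := fun i => Set.Ico (∑ j ∈ Iio i, x j) (∑ j ∈ Iio i, x j + x i)
  have hsub (i : Fin k) : I i ⊆ Set.Ico 0 X :=
    Set.Ico_subset_Ico (sum_nonneg fun j _ => hx0 j) (hX ▸ sum_Iio_add_le_sum hx0 i)
  have hshort (i : Fin k) : ∀ u ∈ I i, ∀ v ∈ I i, |u - v| < 1 := fun u hu v hv =>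
    abs_sub_lt_iff.2 ⟨by linarith [hu.2, hv.1, hx1 i], by linarith [hu.1, hv.2, hx1 i]⟩
  obtain ⟨p, hp, hweight⟩ :=
    exists_offset_le_sum_selection hXpos hℓ.le (fun _ => measurableSet_Ico) hsub hshort w
  simp only [Real.volume_real_Ico_of_le (le_add_of_nonneg_right (hx0 _)),
    add_sub_cancel_left] at hweight
  refine ⟨p, selection X ℓ I p, hp.1, hp.2, fun i => mem_selection (I := I), ?_, ?_, hweight⟩
  · exact selection_pairwise_not_conflict mem hℓ.le (pairwise_disjoint_Ico_sum_Iio hx0)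
      fun z => (hinterval z).imp fun a ha i hi y hy => ha i hi y hy.1 hy.2
  · rw [hℓ]
    exact half_lt_max_one_floor_div hXpos

/-- Cyclic-interval rounding: objects `i : Fin k` with lengths `x i ∈ [0,1]` partition a
circle of circumference `X = ∑ x i > 0` into cyclic intervals `[S i, S i + x i)`; any
conflict point `z` is contained (`mem z i`) only in objects whose intervals fit into a
common cyclic window of length `1`. With `ℓ = max{1, ⌊X⌋}`, there is an offset
`p ∈ [0, X)` such that the objects selected by the rule "`i` is selected iff
`S i ≤ (p + t) mod X < S i + x i` for some `t ∈ {0, …, ℓ-1}`" are pairwise conflict-free,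
`ℓ/X > 1/2`, and the selected set has weight at least `(ℓ/X) · ∑ w i · x i`. -/
theorem cyclic_interval_rounding (k : ℕ) (x w : Fin k → ℝ)
    (hx0 : ∀ i, 0 ≤ x i) (hx1 : ∀ i, x i ≤ 1) (hw : ∀ i, 0 ≤ w i)
    (X : ℝ) (hX : X = ∑ i, x i) (hXpos : 0 < X)
    (ℓ : ℕ) (hℓ : ℓ = max 1 ⌊X⌋₊)
    (S : Fin k → ℝ)
    (hS : ∀ i : Fin k, S i = ∑ j ∈ Finset.univ.filter (fun j => j < i), x j)
    (Z : Type*) (mem : Z → Fin k → Prop)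
    (hinterval : ∀ z : Z, ∃ a : ℝ, ∀ i, mem z i →
      ∀ y : ℝ, S i ≤ y → y < S i + x i →
        ∃ n : ℤ, a ≤ y + n * X ∧ y + n * X < a + 1) :
    ∃ (p : ℝ) (sel : Finset (Fin k)),
      0 ≤ p ∧ p < X ∧
      (∀ i : Fin k, i ∈ sel ↔ ∃ t ∈ Finset.range ℓ,
        S i ≤ cyclicMod X (p + (t : ℝ)) ∧ cyclicMod X (p + (t : ℝ)) < S i + x i) ∧
      (∀ i ∈ sel, ∀ j ∈ sel, i ≠ j → ∀ z : Z, ¬(mem z i ∧ mem z j)) ∧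
      (1 / 2 : ℝ) < (ℓ : ℝ) / X ∧
      (ℓ : ℝ) / X * ∑ i, w i * x i ≤ ∑ i ∈ sel, w i :=
  cyclic_interval_rounding_general k x w hx0 hx1 X hX hXpos ℓ hℓ S hS Z mem hinterval
end
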